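/- For every n ≥ 1 and every natural number l, there exists a D3-directing NFA with n states (and some finite alphabet) whose shortest D3-directing word has length l if and only if there exists a PFA with n states (and some finite alphabet) which carefully synchronizes its full state set and whose shortest carefully synchronizing word for the full state set has length l. In particular, the maximum of d₃ over D3-directing NFAs with n states equals the maximum careful synchronization length p(n) over carefully synchronizing PFAs with n states. -/

import Mathlib

/-- Action of an NFA transition function on a subset of states along a word. -/
def nfaRun {n m : ℕ} (δ : Fin n → Fin m → Finset (Fin n)) :
    Finset (Fin n) → List (Fin m) → Finset (Fin n)
  | S, [] => S
  | S, a :: w => nfaRun δ (S.biUnion fun q => δ q a) w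

/-- The word `w` is D3-directing for the NFA `δ`:
the intersection `⋂_{q ∈ Q} q·w` is nonempty. -/
def nfaD3word {n m : ℕ} (δ : Fin n → Fin m → Finset (Fin n)) (w : List (Fin m)) : Prop :=
  ∃ r : Fin n, ∀ q : Fin n, r ∈ nfaRun δ {q} w

/-- Action of a PFA (partial) transition function on a subset of states along a word. -/
def pfaRun {n m : ℕ} (δ : Fin n → Fin m → Option (Fin n)) :
    Finset (Fin n) → List (Fin m) → Finset (Fin n)
  | S, [] => S
  | S, a :: w =>
      pfaRun δ
        (if ∀ q ∈ S, (δ q a).isSome then S.image (fun q => (δ q a).getD q) else ∅) w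

/-- A word `w` carefully synchronizes the subset `S` in the PFA `δ`. -/
def pfaSync {n m : ℕ} (δ : Fin n → Fin m → Option (Fin n)) (S : Finset (Fin n))
    (w : List (Fin m)) : Prop :=
  (pfaRun δ S w).card = 1

/-!
A PFA is an NFA whose transitions have at most one successor, and for such an NFA a word is
D3-directing exactly when it carefully synchronizes all states; so every careful
synchronization length is a D3 length. Conversely, an NFA `δ` over `Σ` becomes a PFA over
`Σ × (Q → Q)`: the letter `(a, f)` sends `q` to `f q` when `f q ∈ δ q a` and is undefined
otherwise. Every carefully synchronizing word projects to a D3-directing word of `δ`, and a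
D3-directing word with target `r` lifts to a carefully synchronizing one of the same length
by letting `f` choose, at each step, successors from which `r` is still reachable.
-/

def IsMinLength {α : Type*} (P : List α → Prop) (l : ℕ) : Prop :=
  (∃ w, P w ∧ w.length = l) ∧ ∀ w, P w → l ≤ w.length

theorem IsMinLength.transfer {α β : Type*} {P : List α → Prop} {Q : List β → Prop} {l : ℕ}
    (hPQ : ∀ w, P w → ∃ v, Q v ∧ v.length = w.length)
    (hQP : ∀ v, Q v → ∃ w, P w ∧ w.length ≤ v.length) (h : IsMinLength P l) :
    IsMinLength Q l := by
  obtain ⟨⟨w, hw, rfl⟩, hmin⟩ := h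
  obtain ⟨v, hv, hlen⟩ := hPQ w hw
  refine ⟨⟨v, hv, hlen⟩, fun v' hv' => ?_⟩
  obtain ⟨w', hw', hle⟩ := hQP v' hv'
  exact (hmin w' hw').trans hle

section

variable {n m : ℕ}

theorem nfaRun_eq_biUnion (δ : Fin n → Fin m → Finset (Fin n)) (w : List (Fin m))
    (S : Finset (Fin n)) : nfaRun δ S w = S.biUnion fun q => nfaRun δ {q} w := by
  induction w generalizing S with
  | nil => simp [nfaRun]
  | cons a w ih =>
    rw [nfaRun, ih, Finset.biUnion_biUnion]
    refine Finset.biUnion_congr rfl fun q _ => ?_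
    rw [nfaRun, Finset.singleton_biUnion, ih]

theorem mem_nfaRun_iff (δ : Fin n → Fin m → Finset (Fin n)) (w : List (Fin m))
    (S : Finset (Fin n)) (r : Fin n) : r ∈ nfaRun δ S w ↔ ∃ q ∈ S, r ∈ nfaRun δ {q} w := by
  rw [nfaRun_eq_biUnion, Finset.mem_biUnion]

theorem nfaRun_singleton_cons (δ : Fin n → Fin m → Finset (Fin n)) (q : Fin n) (a : Fin m)
    (w : List (Fin m)) : nfaRun δ {q} (a :: w) = nfaRun δ (δ q a) w := by
  rw [nfaRun, Finset.singleton_biUnion]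

def pfaPath (δ : Fin n → Fin m → Option (Fin n)) : Fin n → List (Fin m) → Option (Fin n)
  | q, [] => some q
  | q, a :: w => (δ q a).bind fun p => pfaPath δ p w

theorem pfaRun_empty (δ : Fin n → Fin m → Option (Fin n)) (w : List (Fin m)) :
    pfaRun δ ∅ w = ∅ := by
  induction w with
  | nil => rfl
  | cons a w ih => simpa [pfaRun] using ih

theorem pfaRun_eq_ite (δ : Fin n → Fin m → Option (Fin n)) (w : List (Fin m))
    (S : Finset (Fin n)) :
    pfaRun δ S w = if ∀ q ∈ S, (pfaPath δ q w).isSome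
      then S.biUnion fun q => (pfaPath δ q w).toFinset else ∅ := by
  induction w generalizing S with
  | nil => simp [pfaRun, pfaPath]
  | cons a w ih =>
    by_cases hS : ∀ q ∈ S, (δ q a).isSome
    · have hstep : ∀ q ∈ S, pfaPath δ q (a :: w) = pfaPath δ ((δ q a).getD q) w := by
        intro q hq
        obtain ⟨p, hp⟩ := Option.isSome_iff_exists.mp (hS q hq)
        simp [pfaPath, hp]
      rw [pfaRun, if_pos hS, ih]
      refine if_congr ?_ ?_ rfl
      · simp only [Finset.forall_mem_image]
        exact forall₂_congr fun q hq => by rw [hstep q hq]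
      · rw [Finset.image_biUnion]
        exact Finset.biUnion_congr rfl fun q hq => by rw [hstep q hq]
    · rw [pfaRun, if_neg hS, pfaRun_empty, if_neg]
      push Not at hS ⊢
      obtain ⟨q, hq, hnone⟩ := hS
      exact ⟨q, hq, by simp_all [pfaPath]⟩

theorem pfaSync_univ_iff (δ : Fin n → Fin m → Option (Fin n)) (w : List (Fin m)) :
    pfaSync δ Finset.univ w ↔ ∃ r, ∀ q, pfaPath δ q w = some r := by
  rw [pfaSync, pfaRun_eq_ite]
  split_ifs with hdef
  · rw [Finset.card_eq_one]
    refine exists_congr fun r => ⟨fun h q => ?_, fun h => ?_⟩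
    · obtain ⟨p, hp⟩ := Option.isSome_iff_exists.mp (hdef q (Finset.mem_univ q))
      have : p ∈ ({r} : Finset (Fin n)) := h ▸ Finset.mem_biUnion.mpr ⟨q, by simp, by simp [hp]⟩
      rwa [Finset.mem_singleton.mp this] at hp
    · ext p
      simpa [h] using fun _ => ⟨r⟩
  · simp only [Finset.card_empty, zero_ne_one, false_iff, not_exists]
    intro r hr
    exact hdef fun q _ => by simp [hr q]

def pfaToNfa (δ : Fin n → Fin m → Option (Fin n)) : Fin n → Fin m → Finset (Fin n) :=
  fun q a => (δ q a).toFinset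

theorem nfaRun_pfaToNfa_singleton (δ : Fin n → Fin m → Option (Fin n)) (w : List (Fin m))
    (q : Fin n) : nfaRun (pfaToNfa δ) {q} w = (pfaPath δ q w).toFinset := by
  induction w generalizing q with
  | nil => rfl
  | cons a w ih =>
    rw [nfaRun_singleton_cons, nfaRun_eq_biUnion, pfaToNfa, pfaPath]
    cases δ q a <;> simp [ih]

theorem nfaD3word_pfaToNfa_iff (δ : Fin n → Fin m → Option (Fin n)) (w : List (Fin m)) :
    nfaD3word (pfaToNfa δ) w ↔ pfaSync δ Finset.univ w := by
  simp [nfaD3word, nfaRun_pfaToNfa_singleton, pfaSync_univ_iff]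

abbrev nfaToPfaAlphabetCard (n m : ℕ) : ℕ := Fintype.card (Fin m × (Fin n → Fin n))

noncomputable def nfaToPfa (δ : Fin n → Fin m → Finset (Fin n)) :
    Fin n → Fin (nfaToPfaAlphabetCard n m) → Option (Fin n) := fun q x =>
  let (a, f) := (Fintype.equivFin _).symm x
  if f q ∈ δ q a then some (f q) else none

noncomputable def nfaToPfaLetter (n : ℕ) {m : ℕ} (x : Fin (nfaToPfaAlphabetCard n m)) :
    Fin m :=
  ((Fintype.equivFin _).symm x).1

theorem mem_nfaRun_of_pfaPath_nfaToPfa (δ : Fin n → Fin m → Finset (Fin n))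
    (v : List (Fin (nfaToPfaAlphabetCard n m))) (q r : Fin n)
    (h : pfaPath (nfaToPfa δ) q v = some r) : r ∈ nfaRun δ {q} (v.map (nfaToPfaLetter n)) := by
  induction v generalizing q with
  | nil => simpa [pfaPath, nfaRun] using h.symm
  | cons x v ih =>
    obtain ⟨p, hp, hpath⟩ := Option.bind_eq_some_iff.mp h
    rw [List.map_cons, nfaRun_singleton_cons, mem_nfaRun_iff]
    refine ⟨p, ?_, ih p hpath⟩
    simp only [nfaToPfa] at hp
    split_ifs at hp with hmem
    obtain rfl := Option.some_injective _ hp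
    exact hmem

theorem exists_pfaPath_nfaToPfa (δ : Fin n → Fin m → Finset (Fin n)) (r : Fin n)
    (w : List (Fin m)) :
    ∃ v : List (Fin (nfaToPfaAlphabetCard n m)), v.length = w.length ∧
      ∀ q, r ∈ nfaRun δ {q} w → pfaPath (nfaToPfa δ) q v = some r := by
  induction w with
  | nil => exact ⟨[], rfl, fun q hq => by simp_all [pfaPath, nfaRun]⟩
  | cons a w ih =>
    obtain ⟨v, hlen, hv⟩ := ih
    have hsucc : ∀ q, ∃ p, r ∈ nfaRun δ {q} (a :: w) → p ∈ δ q a ∧ r ∈ nfaRun δ {p} w := by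
      intro q
      by_cases hq : r ∈ nfaRun δ {q} (a :: w)
      · rw [nfaRun_singleton_cons, mem_nfaRun_iff] at hq
        obtain ⟨p, hp⟩ := hq
        exact ⟨p, fun _ => hp⟩
      · exact ⟨q, fun h => absurd h hq⟩
    choose f hf using hsucc
    refine ⟨Fintype.equivFin _ (a, f) :: v, by simp [hlen], fun q hq => ?_⟩
    obtain ⟨hfq, hrfq⟩ := hf q hq
    simp [pfaPath, nfaToPfa, hfq, hv _ hrfq]

theorem IsMinLength.nfaD3word_pfaToNfa {δ : Fin n → Fin m → Option (Fin n)} {l : ℕ}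
    (h : IsMinLength (pfaSync δ Finset.univ) l) : IsMinLength (nfaD3word (pfaToNfa δ)) l :=
  h.transfer (fun w hw => ⟨w, (nfaD3word_pfaToNfa_iff δ w).mpr hw, rfl⟩)
    fun w hw => ⟨w, (nfaD3word_pfaToNfa_iff δ w).mp hw, le_rfl⟩

theorem IsMinLength.pfaSync_nfaToPfa {δ : Fin n → Fin m → Finset (Fin n)} {l : ℕ}
    (h : IsMinLength (nfaD3word δ) l) : IsMinLength (pfaSync (nfaToPfa δ) Finset.univ) l := by
  refine h.transfer ?_ ?_
  · rintro w ⟨r, hr⟩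
    obtain ⟨v, hlen, hv⟩ := exists_pfaPath_nfaToPfa δ r w
    exact ⟨v, (pfaSync_univ_iff _ v).mpr ⟨r, fun q => hv q (hr q)⟩, hlen⟩
  · intro v hv
    obtain ⟨r, hr⟩ := (pfaSync_univ_iff _ v).mp hv
    exact ⟨v.map (nfaToPfaLetter n), ⟨r, fun q => mem_nfaRun_of_pfaPath_nfaToPfa δ v q r (hr q)⟩,
      (List.length_map _).le⟩

end

theorem stmt16_general (n : ℕ) :
    (∀ l : ℕ,
      (∃ (m : ℕ) (δ : Fin n → Fin m → Finset (Fin n)),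
        (∃ w, nfaD3word δ w ∧ w.length = l) ∧ ∀ w, nfaD3word δ w → l ≤ w.length) ↔
      (∃ (m : ℕ) (δ : Fin n → Fin m → Option (Fin n)),
        (∃ w, pfaSync δ Finset.univ w ∧ w.length = l) ∧
          ∀ w, pfaSync δ Finset.univ w → l ≤ w.length)) ∧
    -- in particular, the maximum of d₃ over D3-directing NFAs with n states
    -- equals the maximum careful synchronization length p(n) over PFAs with n states
    sSup {l : ℕ | ∃ (m : ℕ) (δ : Fin n → Fin m → Finset (Fin n)),
        (∃ w, nfaD3word δ w ∧ w.length = l) ∧ ∀ w, nfaD3word δ w → l ≤ w.length} =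
      sSup {l : ℕ | ∃ (m : ℕ) (δ : Fin n → Fin m → Option (Fin n)),
        (∃ w, pfaSync δ Finset.univ w ∧ w.length = l) ∧
          ∀ w, pfaSync δ Finset.univ w → l ≤ w.length} := by
  have key : ∀ l : ℕ, (∃ (m : ℕ) (δ : Fin n → Fin m → Finset (Fin n)),
      IsMinLength (nfaD3word δ) l) ↔
      ∃ (m : ℕ) (δ : Fin n → Fin m → Option (Fin n)), IsMinLength (pfaSync δ Finset.univ) l :=
    fun l => ⟨fun ⟨_, δ, h⟩ => ⟨_, nfaToPfa δ, h.pfaSync_nfaToPfa⟩,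
      fun ⟨m, δ, h⟩ => ⟨m, pfaToNfa δ, h.nfaD3word_pfaToNfa⟩⟩
  exact ⟨key, congrArg sSup (Set.ext key)⟩

theorem stmt16 (n : ℕ) (hn : 1 ≤ n) :
    (∀ l : ℕ,
      (∃ (m : ℕ) (δ : Fin n → Fin m → Finset (Fin n)),
        (∃ w, nfaD3word δ w ∧ w.length = l) ∧ ∀ w, nfaD3word δ w → l ≤ w.length) ↔
      (∃ (m : ℕ) (δ : Fin n → Fin m → Option (Fin n)),
        (∃ w, pfaSync δ Finset.univ w ∧ w.length = l) ∧
          ∀ w, pfaSync δ Finset.univ w → l ≤ w.length)) ∧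
    -- in particular, the maximum of d₃ over D3-directing NFAs with n states
    -- equals the maximum careful synchronization length p(n) over PFAs with n states
    sSup {l : ℕ | ∃ (m : ℕ) (δ : Fin n → Fin m → Finset (Fin n)),
        (∃ w, nfaD3word δ w ∧ w.length = l) ∧ ∀ w, nfaD3word δ w → l ≤ w.length} =
      sSup {l : ℕ | ∃ (m : ℕ) (δ : Fin n → Fin m → Option (Fin n)),
        (∃ w, pfaSync δ Finset.univ w ∧ w.length = l) ∧
          ∀ w, pfaSync δ Finset.univ w → l ≤ w.length} :=
  stmt16_general n
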